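/- Let Ω be a compact subset of ℝ^n (n ≥ 2) with positive Lebesgue measure. Then the center of mass of Ω, i.e. the point (1/|Ω|) ∫_Ω x dx where |Ω| is the Lebesgue measure of Ω, belongs to the minimal unfolded region Uf(Ω); in particular Uf(Ω) is nonempty. -/

import Mathlib

open scoped RealInnerProductSpace

/-- Reflection in the hyperplane `{x : x·v = b}` (for a unit vector `v`). -/
noncomputable def reflHyp {n : ℕ} (v : EuclideanSpace ℝ (Fin n)) (b : ℝ)
    (x : EuclideanSpace ℝ (Fin n)) : EuclideanSpace ℝ (Fin n) :=
  x - (2 * (⟪x, v⟫ - b)) • v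

/-- The open cap of `X` above the hyperplane `{x : x·v = b}`. -/
def cap {n : ℕ} (X : Set (EuclideanSpace ℝ (Fin n))) (v : EuclideanSpace ℝ (Fin n)) (b : ℝ) :
    Set (EuclideanSpace ℝ (Fin n)) :=
  X ∩ {x | b < ⟪x, v⟫}

/-- The level of the maximal cap of `X` in direction `v`. -/
noncomputable def level {n : ℕ} (X : Set (EuclideanSpace ℝ (Fin n)))
    (v : EuclideanSpace ℝ (Fin n)) : ℝ :=
  sInf {a : ℝ | ∀ b : ℝ, a ≤ b → reflHyp v b '' cap X v b ⊆ X}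

/-- The minimal unfolded region (heart) of `X`. -/
noncomputable def Uf {n : ℕ} (X : Set (EuclideanSpace ℝ (Fin n))) :
    Set (EuclideanSpace ℝ (Fin n)) :=
  ⋂ v ∈ {v : EuclideanSpace ℝ (Fin n) | ‖v‖ = 1}, {x | ⟪x, v⟫ ≤ level X v}

/-- The δ-parallel body of `Ω`: the union of closed δ-balls centered in `Ω`. -/
def parallelBody {n : ℕ} (Ω : Set (EuclideanSpace ℝ (Fin n))) (δ : ℝ) :
    Set (EuclideanSpace ℝ (Fin n)) :=
  ⋃ x ∈ Ω, Metric.closedBall x δ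

/-! Fix a unit vector `v` and a level `a` such that the reflection `R` in `{x·v = a}` maps the
cap `C` of `Ω` above that hyperplane into `Ω`. Since `R` preserves volume and negates
`g x = x·v - a`, we get `∫_C g = -∫_{R C} g`, and `R C` lies in the part of `Ω` below the
hyperplane, where `g ≤ 0`. Hence `∫_Ω g ≤ 0`, i.e. the centroid `c` satisfies `c·v ≤ a`; taking
the infimum over such `a` gives `c·v ≤ l_Ω(v)`. -/

open MeasureTheory

section Reflection

variable {n : ℕ} {v : EuclideanSpace ℝ (Fin n)}

lemma inner_reflHyp (hv : ‖v‖ = 1) (b : ℝ) (x : EuclideanSpace ℝ (Fin n)) :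
    ⟪reflHyp v b x, v⟫ = 2 * b - ⟪x, v⟫ := by
  rw [reflHyp, inner_sub_left, real_inner_smul_left, real_inner_self_eq_norm_sq, hv]
  ring

lemma reflHyp_eq_reflection_add (hv : ‖v‖ = 1) (b : ℝ) :
    reflHyp v b = fun x => (ℝ ∙ v)ᗮ.reflection x + (2 * b) • v := by
  funext x
  rw [Submodule.reflection_orthogonal_apply, Submodule.reflection_singleton_apply, hv,
    reflHyp, real_inner_comm]
  module

lemma reflHyp_involutive (hv : ‖v‖ = 1) (b : ℝ) : Function.Involutive (reflHyp v b) := by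
  intro x
  simp only [reflHyp_eq_reflection_add hv, map_add, Submodule.reflection_reflection, map_smul,
    Submodule.reflection_orthogonalComplement_singleton_eq_neg]
  module

lemma measurePreserving_reflHyp (hv : ‖v‖ = 1) (b : ℝ) :
    MeasurePreserving (reflHyp v b) volume volume := by
  rw [reflHyp_eq_reflection_add hv]
  exact (measurePreserving_add_right volume _).comp (ℝ ∙ v)ᗮ.reflection.measurePreserving

lemma measurableEmbedding_reflHyp (hv : ‖v‖ = 1) (b : ℝ) :
    MeasurableEmbedding (reflHyp v b) := by
  refine (MeasurableEquiv.ofInvolutive _ (reflHyp_involutive hv b) ?_).measurableEmbedding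
  rw [reflHyp_eq_reflection_add hv]
  fun_prop

end Reflection

lemma setIntegral_inner_sub_nonpos_of_reflHyp_cap_subset {n : ℕ}
    {v : EuclideanSpace ℝ (Fin n)} (hv : ‖v‖ = 1) {Ω : Set (EuclideanSpace ℝ (Fin n))}
    {a : ℝ} (hint : IntegrableOn (fun x => ⟪x, v⟫ - a) Ω)
    (hcap : reflHyp v a '' cap Ω v a ⊆ Ω) :
    ∫ x in Ω, (⟪x, v⟫ - a) ≤ 0 := by
  set g : EuclideanSpace ℝ (Fin n) → ℝ := fun x => ⟪x, v⟫ - a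
  set H := {x : EuclideanSpace ℝ (Fin n) | a < ⟪x, v⟫}
  have hH : MeasurableSet H := measurableSet_lt measurable_const (by fun_prop)
  have hsplit : (∫ x in cap Ω v a, g x) + ∫ x in Ω \ H, g x = ∫ x in Ω, g x :=
    integral_inter_add_sdiff hH hint
  have hg_refl : ∀ x, -g (reflHyp v a x) = g x := fun x => by
    simp only [g, inner_reflHyp hv]
    ring
  have hcap_refl : ∫ x in cap Ω v a, g x = ∫ y in reflHyp v a '' cap Ω v a, -g y := by
    rw [(measurePreserving_reflHyp hv a).setIntegral_image_emb (measurableEmbedding_reflHyp hv a)]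
    simp only [hg_refl]
  have himage : reflHyp v a '' cap Ω v a ⊆ Ω \ H := by
    rintro _ ⟨x, hx, rfl⟩
    have hxa : a < ⟪x, v⟫ := hx.2
    refine ⟨hcap ⟨x, hx, rfl⟩, ?_⟩
    simp only [H, Set.mem_ofPred_eq, inner_reflHyp hv]
    linarith
  have hg_below : ∀ᵐ x ∂volume.restrict (Ω \ H), 0 ≤ -g x :=
    ae_restrict_of_ae_restrict_of_subset (Set.sdiff_subset_compl Ω H) <|
      ae_restrict_of_forall_mem hH.compl fun x hx => by simpa [g, H] using hx
  have hbelow : ∫ y in reflHyp v a '' cap Ω v a, -g y ≤ -∫ y in Ω \ H, g y := by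
    rw [← integral_neg]
    exact setIntegral_mono_set (hint.mono_set Set.sdiff_subset).neg hg_below himage.eventuallyLE
  change ∫ x in Ω, g x ≤ 0
  linarith

lemma inner_centroid_le_of_setIntegral_inner_sub_nonpos {E : Type*} [NormedAddCommGroup E]
    [InnerProductSpace ℝ E] [CompleteSpace E] [MeasurableSpace E] {μ : Measure E} {Ω : Set E}
    (hid : IntegrableOn (fun x => x) Ω μ) (hvol : 0 < (μ Ω).toReal) {v : E} {a : ℝ}
    (h : ∫ x in Ω, (⟪x, v⟫ - a) ∂μ ≤ 0) :
    ⟪(μ Ω).toReal⁻¹ • ∫ x in Ω, x ∂μ, v⟫ ≤ a := by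
  have hfin : μ Ω ≠ ⊤ := (ENNReal.toReal_pos_iff.1 hvol).2.ne
  have hinner : ∫ x in Ω, ⟪x, v⟫ ∂μ = ⟪∫ x in Ω, x ∂μ, v⟫ := by
    simpa only [real_inner_comm v] using integral_inner hid v
  have hconst : IntegrableOn (fun _ => a) Ω μ := integrableOn_const hfin
  rw [integral_sub (hid.inner_const v) hconst, setIntegral_const, smul_eq_mul, hinner] at h
  rw [real_inner_smul_left, inv_mul_le_iff₀ hvol]
  exact sub_nonpos.1 h

lemma le_level_of_forall_le {n : ℕ} {X : Set (EuclideanSpace ℝ (Fin n))}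
    (hX : Bornology.IsBounded X) {v : EuclideanSpace ℝ (Fin n)} (hv : ‖v‖ = 1) {c : ℝ}
    (h : ∀ a, reflHyp v a '' cap X v a ⊆ X → c ≤ a) : c ≤ level X v := by
  obtain ⟨M, hM⟩ := (Metric.isBounded_iff_subset_closedBall 0).1 hX
  have hcap_empty : ∀ b, M ≤ b → cap X v b = ∅ := fun b hb => by
    refine Set.eq_empty_of_forall_notMem fun x ⟨hxX, hxb⟩ => ?_
    have hxv : ⟪x, v⟫ ≤ ‖x‖ := by simpa [hv] using real_inner_le_norm x v
    linarith [mem_closedBall_zero_iff.1 (hM hxX), hxb.out]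
  exact le_csInf ⟨M, fun b hb => by simp [hcap_empty b hb]⟩ fun a ha => h a (ha a le_rfl)

open MeasureTheory in
theorem stmt12_general {n : ℕ} (Ω : Set (EuclideanSpace ℝ (Fin n)))
    (hΩ : IsCompact Ω) (hpos : 0 < volume Ω) :
    (volume Ω).toReal⁻¹ • (∫ x in Ω, x) ∈ Uf Ω ∧ (Uf Ω).Nonempty := by
  have hvol : 0 < (volume Ω).toReal := ENNReal.toReal_pos hpos.ne' hΩ.measure_lt_top.ne
  have hmem : (volume Ω).toReal⁻¹ • (∫ x in Ω, x) ∈ Uf Ω := by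
    refine Set.mem_iInter₂.2 fun v (hv : ‖v‖ = 1) => ?_
    refine le_level_of_forall_le hΩ.isBounded hv fun a hcap => ?_
    have hint : IntegrableOn (fun x => ⟪x, v⟫ - a) Ω :=
      (by fun_prop : Continuous fun x => ⟪x, v⟫ - a).continuousOn.integrableOn_compact hΩ
    exact inner_centroid_le_of_setIntegral_inner_sub_nonpos
      (continuous_id.continuousOn.integrableOn_compact hΩ) hvol
      (setIntegral_inner_sub_nonpos_of_reflHyp_cap_subset hv hint hcap)
  exact ⟨hmem, _, hmem⟩

open MeasureTheory in
theorem stmt12 {n : ℕ} (hn : 2 ≤ n) (Ω : Set (EuclideanSpace ℝ (Fin n)))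
    (hΩ : IsCompact Ω) (hpos : 0 < volume Ω) :
    (volume Ω).toReal⁻¹ • (∫ x in Ω, x) ∈ Uf Ω ∧ (Uf Ω).Nonempty :=
  stmt12_general Ω hΩ hpos
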